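/- Let Λ be a row-finite k-graph with no sources and let T_Λ be its talented monoid. For any ℤ^k-order ideal J of T_Λ, the set H_J := {v ∈ Λ⁰ : v(0) ∈ J} is hereditary and saturated in Λ⁰. -/

import Mathlib

/-- A (small) `k`-graph: a small category `Λ` with vertex set `V`, path set `P`,
range and source maps `r, s`, a degree functor `d : Λ → ℕᵏ` satisfying the
unique factorization property. -/
structure KGraph (k : ℕ) where
  V : Type
  P : Type
  r : P → V
  s : P → V
  d : P → Fin k → ℕ
  ident : V → P
  comp : (p q : P) → s p = r q → P
  r_ident : ∀ v, r (ident v) = v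
  s_ident : ∀ v, s (ident v) = v
  d_ident : ∀ v, d (ident v) = 0
  r_comp : ∀ p q h, r (comp p q h) = r p
  s_comp : ∀ p q h, s (comp p q h) = s q
  d_comp : ∀ p q h, d (comp p q h) = d p + d q
  ident_comp : ∀ (p : P) (h : s (ident (r p)) = r p), comp (ident (r p)) p h = p
  comp_ident : ∀ (p : P) (h : s p = r (ident (s p))), comp p (ident (s p)) h = p
  comp_assoc : ∀ (p q t : P) (h1 : s p = r q) (h2 : s q = r t)
      (h3 : s (comp p q h1) = r t) (h4 : s p = r (comp q t h2)),
      comp (comp p q h1) t h3 = comp p (comp q t h2) h4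
  factor : ∀ (p : P) (m n : Fin k → ℕ), d p = m + n →
      ∃! qt : P × P, ∃ h : s qt.1 = r qt.2,
        comp qt.1 qt.2 h = p ∧ d qt.1 = m ∧ d qt.2 = n

namespace KGraph

variable {k : ℕ}

/-- `vΛⁿ`, the set of paths with range `v` and degree `n`. -/
def pathsSet (Λ : KGraph k) (v : Λ.V) (n : Fin k → ℕ) : Set Λ.P :=
  {p | Λ.r p = v ∧ Λ.d p = n}

/-- `Λ` is row-finite if every `vΛⁿ` is finite. -/
def RowFinite (Λ : KGraph k) : Prop := ∀ v n, (Λ.pathsSet v n).Finite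

/-- `Λ` has no sources if every `vΛⁿ` is nonempty. -/
def NoSources (Λ : KGraph k) : Prop := ∀ v n, (Λ.pathsSet v n).Nonempty

/-- The element `Σ_{λ ∈ vΛⁿ} s(λ)` of the free commutative monoid `ℕ^(Λ⁰)`. -/
noncomputable def vSum (Λ : KGraph k) (hfin : Λ.RowFinite) (v : Λ.V) (n : Fin k → ℕ) :
    Λ.V →₀ ℕ :=
  ∑ p ∈ (hfin v n).toFinset, Finsupp.single (Λ.s p) 1

end KGraph

namespace KGraph

/-- The free commutative monoid on `Λ⁰ × ℤᵏ`. -/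
abbrev TalF (Λ : KGraph k) : Type := (Λ.V × (Fin k → ℤ)) →₀ ℕ

/-- The defining relations of the talented monoid:
`v(n) = Σ_{α ∈ vΛ^{e_i}} s(α)(n + e_i)`. -/
noncomputable def TalRel (Λ : KGraph k) (hfin : Λ.RowFinite) : TalF Λ → TalF Λ → Prop :=
  fun a b => ∃ (v : Λ.V) (n : Fin k → ℤ) (i : Fin k),
    a = Finsupp.single (v, n) 1 ∧
    b = ∑ p ∈ (hfin v (Pi.single i 1)).toFinset,
          Finsupp.single (Λ.s p, n + Pi.single i 1) 1

/-- The congruence generated by the defining relations of the talented monoid. -/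
noncomputable def TalCon (Λ : KGraph k) (hfin : Λ.RowFinite) : AddCon (TalF Λ) :=
  addConGen (TalRel Λ hfin)

/-- The talented monoid `T_Λ`. -/
abbrev Tal (Λ : KGraph k) (hfin : Λ.RowFinite) : Type := (TalCon Λ hfin).Quotient

/-- The quotient map `ℕ^(Λ⁰ × ℤᵏ) → T_Λ`. -/
noncomputable def tmk (Λ : KGraph k) (hfin : Λ.RowFinite) : TalF Λ → Tal Λ hfin :=
  (TalCon Λ hfin).mk'

/-- Shift of states on the free commutative monoid; it induces the `ℤᵏ`-action on `T_Λ`. -/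
noncomputable def shiftF (Λ : KGraph k) (p : Fin k → ℤ) : TalF Λ → TalF Λ :=
  Finsupp.mapDomain (fun q => (q.1, q.2 + p))

/-- A `ℤᵏ`-order ideal of `T_Λ`: a submonoid, downward closed in the algebraic
preorder, and closed under the `ℤᵏ`-action (expressed on representatives). -/
noncomputable def IsOrderIdeal (Λ : KGraph k) (hfin : Λ.RowFinite)
    (J : Set (Tal Λ hfin)) : Prop :=
  (0 : Tal Λ hfin) ∈ J ∧
  (∀ a b, a ∈ J → b ∈ J → a + b ∈ J) ∧
  (∀ a b : Tal Λ hfin, a + b ∈ J → a ∈ J) ∧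
  (∀ (p : Fin k → ℤ) (a : TalF Λ), tmk Λ hfin a ∈ J → tmk Λ hfin (shiftF Λ p a) ∈ J)

/-- `H ⊆ Λ⁰` is hereditary. -/
def Hereditary (Λ : KGraph k) (H : Set Λ.V) : Prop :=
  ∀ p : Λ.P, Λ.r p ∈ H → Λ.s p ∈ H

/-- `H ⊆ Λ⁰` is saturated. -/
def Saturated (Λ : KGraph k) (H : Set Λ.V) : Prop :=
  ∀ (v : Λ.V) (n : Fin k → ℕ),
    (∀ p : Λ.P, Λ.r p = v → Λ.d p = n → Λ.s p ∈ H) → v ∈ H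

/-- The `ℤᵏ`-order ideal of `T_Λ` generated by a set `X ⊆ Λ⁰` of vertices:
all `x` with `x ≤ Σᵢ ⁿⁱvᵢ` for finitely many `vᵢ ∈ X`, `nᵢ ∈ ℤᵏ`. -/
noncomputable def genIdeal (Λ : KGraph k) (hfin : Λ.RowFinite) (X : Set Λ.V) :
    Set (Tal Λ hfin) :=
  {x | ∃ b : TalF Λ, (∀ q ∈ b.support, q.1 ∈ X) ∧ ∃ z, x + z = tmk Λ hfin b}

end KGraph
/-!
Iterating the defining relations along the unique factorisation property gives
`v(m) = Σ_{λ ∈ vΛⁿ} s(λ)(m + n)` for every `n ∈ ℕᵏ`. Since an order ideal is closed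
under the `ℤᵏ`-action, membership of `w(m)` in it does not depend on `m`; so if `r(λ)(0)`
lies in `J`, the summand `s(λ)(d(λ))` does by downward closure, and if every `s(λ)(0)`,
`λ ∈ vΛⁿ`, lies in `J`, so does their shifted sum `v(0)`.
-/

namespace KGraph

variable {k : ℕ}

def castVec (n : Fin k → ℕ) : Fin k → ℤ := fun i => (n i : ℤ)

lemma castVec_zero : castVec (0 : Fin k → ℕ) = 0 := by
  funext i; simp [castVec]

lemma castVec_add (m n : Fin k → ℕ) : castVec (m + n) = castVec m + castVec n := by
  funext i; simp [castVec]

lemma castVec_single (i : Fin k) :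
    castVec (Pi.single i 1) = (Pi.single i 1 : Fin k → ℤ) := by
  funext j
  simp [castVec, Pi.single_apply, apply_ite (Nat.cast : ℕ → ℤ)]

section Paths

variable (Λ : KGraph k)

lemma eq_of_comp_eq {a b : Fin k → ℕ} {α α' β β' : Λ.P}
    (hα : Λ.d α = a) (hβ : Λ.d β = b) (hα' : Λ.d α' = a) (hβ' : Λ.d β' = b)
    (h : Λ.s α = Λ.r β) (h' : Λ.s α' = Λ.r β') (heq : Λ.comp α β h = Λ.comp α' β' h') :
    α = α' ∧ β = β' := by
  obtain ⟨qt, _, huniq⟩ := Λ.factor (Λ.comp α β h) a b (by rw [Λ.d_comp, hα, hβ])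
  have e := (huniq (α, β) ⟨h, rfl, hα, hβ⟩).trans (huniq (α', β') ⟨h', heq.symm, hα', hβ'⟩).symm
  exact Prod.mk.inj e

lemma eq_ident_of_d_eq_zero {p : Λ.P} (hp : Λ.d p = 0) : p = Λ.ident (Λ.r p) := by
  have h : Λ.s (Λ.ident (Λ.r p)) = Λ.r p := Λ.s_ident _
  have h' : Λ.s p = Λ.r (Λ.ident (Λ.s p)) := (Λ.r_ident _).symm
  refine (Λ.eq_of_comp_eq (Λ.d_ident _) hp hp (Λ.d_ident _) h h' ?_).1.symm
  rw [Λ.ident_comp, Λ.comp_ident]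

lemma pathsSet_zero (v : Λ.V) : Λ.pathsSet v 0 = {Λ.ident v} := by
  ext p
  constructor
  · rintro ⟨rfl, hd⟩
    exact eq_ident_of_d_eq_zero Λ hd
  · rintro rfl
    exact ⟨Λ.r_ident v, Λ.d_ident v⟩

/-- Composition `(α, β) ↦ αβ` is a bijection from pairs `α ∈ vΛᵃ`, `β ∈ s(α)Λᵇ`
onto `vΛ^{a+b}`, by unique factorisation. -/
lemma sum_pathsSet_add {M : Type*} [AddCommMonoid M] (hfin : Λ.RowFinite) (f : Λ.V → M)
    (v : Λ.V) (a b : Fin k → ℕ) :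
    ∑ α ∈ (hfin v a).toFinset, ∑ β ∈ (hfin (Λ.s α) b).toFinset, f (Λ.s β) =
      ∑ p ∈ (hfin v (a + b)).toFinset, f (Λ.s p) := by
  have mem {p : Λ.P} {w : Λ.V} {n : Fin k → ℕ} :
      p ∈ (hfin w n).toFinset ↔ Λ.r p = w ∧ Λ.d p = n := (hfin w n).mem_toFinset
  rw [Finset.sum_sigma']
  refine Finset.sum_bij
    (fun x hx => Λ.comp x.1 x.2 (mem.1 (Finset.mem_sigma.1 hx).2).1.symm) ?_ ?_ ?_ ?_
  · rintro ⟨α, β⟩ hx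
    obtain ⟨⟨hrα, hdα⟩, -, hdβ⟩ := And.imp mem.1 mem.1 (Finset.mem_sigma.1 hx)
    exact mem.2 ⟨by rw [Λ.r_comp, hrα], by rw [Λ.d_comp, hdα, hdβ]⟩
  · rintro ⟨α, β⟩ hx ⟨α', β'⟩ hx' heq
    obtain ⟨⟨-, hdα⟩, -, hdβ⟩ := And.imp mem.1 mem.1 (Finset.mem_sigma.1 hx)
    obtain ⟨⟨-, hdα'⟩, -, hdβ'⟩ := And.imp mem.1 mem.1 (Finset.mem_sigma.1 hx')
    obtain ⟨rfl, rfl⟩ := Λ.eq_of_comp_eq hdα hdβ hdα' hdβ' _ _ heq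
    rfl
  · intro p hp
    obtain ⟨hrp, hdp⟩ := mem.1 hp
    obtain ⟨⟨α, β⟩, ⟨h, hcomp, hdα, hdβ⟩, -⟩ := Λ.factor p a b hdp
    refine ⟨⟨α, β⟩, Finset.mem_sigma.2 ⟨mem.2 ⟨?_, hdα⟩, mem.2 ⟨h.symm, hdβ⟩⟩, hcomp⟩
    rw [← hrp, ← hcomp, Λ.r_comp]
  · intro x hx
    rw [Λ.s_comp]

end Paths

section Talented

variable (Λ : KGraph k) (hfin : Λ.RowFinite)

lemma tmk_single_eq_sum_edges (v : Λ.V) (m : Fin k → ℤ) (i : Fin k) :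
    tmk Λ hfin (Finsupp.single (v, m) 1) =
      ∑ α ∈ (hfin v (Pi.single i 1)).toFinset,
        tmk Λ hfin (Finsupp.single (Λ.s α, m + Pi.single i 1) 1) := by
  simp only [tmk, ← map_sum]
  exact (AddCon.eq _).2 (AddConGen.Rel.of _ _ ⟨v, m, i, rfl, rfl⟩)

def expansionDegrees : AddSubmonoid (Fin k → ℕ) where
  carrier := {n | ∀ v m, tmk Λ hfin (Finsupp.single (v, m) 1) =
    ∑ p ∈ (hfin v n).toFinset, tmk Λ hfin (Finsupp.single (Λ.s p, m + castVec n) 1)}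
  zero_mem' v m := by
    rw [show (hfin v 0).toFinset = {Λ.ident v} by simp [pathsSet_zero]]
    simp [Λ.s_ident, castVec_zero]
  add_mem' {a b} ha hb v m := by
    calc tmk Λ hfin (Finsupp.single (v, m) 1)
        = ∑ α ∈ (hfin v a).toFinset, ∑ β ∈ (hfin (Λ.s α) b).toFinset,
            tmk Λ hfin (Finsupp.single (Λ.s β, m + castVec a + castVec b) 1) := by
          rw [ha]
          exact Finset.sum_congr rfl fun α _ => hb _ _
      _ = _ := by
          rw [castVec_add, ← add_assoc]
          exact Λ.sum_pathsSet_add hfin (fun w => tmk Λ hfin (Finsupp.single (w, _) 1)) v a b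

lemma single_one_mem_expansionDegrees (i : Fin k) :
    Pi.single i 1 ∈ expansionDegrees Λ hfin := fun v m => by
  rw [castVec_single]
  exact tmk_single_eq_sum_edges Λ hfin v m i

lemma tmk_single_eq_sum_paths (n : Fin k → ℕ) (v : Λ.V) (m : Fin k → ℤ) :
    tmk Λ hfin (Finsupp.single (v, m) 1) =
      ∑ p ∈ (hfin v n).toFinset, tmk Λ hfin (Finsupp.single (Λ.s p, m + castVec n) 1) := by
  suffices n ∈ expansionDegrees Λ hfin from this v m
  induction n using Pi.single_induction with
  | zero => exact zero_mem _
  | add a b ha hb => exact add_mem ha hb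
  | single i c =>
    rw [show (Pi.single i c : Fin k → ℕ) = c • Pi.single i 1 by simp [← Pi.single_smul]]
    exact nsmul_mem (single_one_mem_expansionDegrees Λ hfin i) c

variable {Λ hfin} in
lemma IsOrderIdeal.tmk_single_mem_iff {J : Set (Tal Λ hfin)} (hJ : IsOrderIdeal Λ hfin J)
    (v : Λ.V) (m m' : Fin k → ℤ) :
    tmk Λ hfin (Finsupp.single (v, m) 1) ∈ J ↔ tmk Λ hfin (Finsupp.single (v, m') 1) ∈ J := by
  suffices ∀ m m', tmk Λ hfin (Finsupp.single (v, m) 1) ∈ J →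
      tmk Λ hfin (Finsupp.single (v, m') 1) ∈ J from ⟨this m m', this m' m⟩
  intro m m' h
  simpa [shiftF, Finsupp.mapDomain_single] using hJ.2.2.2 (m' - m) _ h

end Talented

end KGraph

open KGraph in
theorem stmt10_general {k : ℕ} (Λ : KGraph k) (hfin : Λ.RowFinite)
    (J : Set (Tal Λ hfin)) (hJ : IsOrderIdeal Λ hfin J) :
    Hereditary Λ {v | tmk Λ hfin (Finsupp.single (v, (0 : Fin k → ℤ)) 1) ∈ J} ∧
    Saturated Λ {v | tmk Λ hfin (Finsupp.single (v, (0 : Fin k → ℤ)) 1) ∈ J} := by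
  constructor
  · classical
    intro p (hp : _ ∈ J)
    have hmem : p ∈ (hfin (Λ.r p) (Λ.d p)).toFinset := (hfin _ _).mem_toFinset.2 ⟨rfl, rfl⟩
    rw [tmk_single_eq_sum_paths Λ hfin (Λ.d p),
      ← Finset.add_sum_erase _ _ hmem] at hp
    exact (hJ.tmk_single_mem_iff _ _ _).1 (hJ.2.2.1 _ _ hp)
  · intro v n hH
    show _ ∈ J
    rw [tmk_single_eq_sum_paths Λ hfin n]
    refine Finset.sum_induction _ (· ∈ J) hJ.2.1 hJ.1 fun p hp => ?_
    obtain ⟨hr, hd⟩ := (hfin v n).mem_toFinset.1 hp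
    exact (hJ.tmk_single_mem_iff _ _ _).1 (hH p hr hd)

open KGraph in
/-- For a row-finite `k`-graph `Λ` with no sources and a `ℤᵏ`-order ideal `J` of
the talented monoid `T_Λ`, the set `H_J = {v : v(0) ∈ J}` is hereditary and
saturated. -/
theorem stmt10 {k : ℕ} (Λ : KGraph k) (hfin : Λ.RowFinite) (hns : Λ.NoSources)
    (J : Set (Tal Λ hfin)) (hJ : IsOrderIdeal Λ hfin J) :
    Hereditary Λ {v | tmk Λ hfin (Finsupp.single (v, (0 : Fin k → ℤ)) 1) ∈ J} ∧
    Saturated Λ {v | tmk Λ hfin (Finsupp.single (v, (0 : Fin k → ℤ)) 1) ∈ J} :=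
  stmt10_general Λ hfin J hJ
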